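/- Let C be a Krull-Schmidt, K-linear extriangulated category (K a field) with dim_K Hom_C(X,Y) < ∞ and dim_K E(X,Y) < ∞ for all X,Y ∈ C. Let A → B --(g1,g2)^T--> C1 ⊕ C2 --δ--> be an E-triangle in C in which g1 : B → C1 is a retraction. Then this E-triangle is isomorphic to an E-triangle A --(0,f2)^T--> C1 ⊕ B2 --diag(1, g22)--> C1 ⊕ C2 --δ'-->, and moreover it is the direct sum of the E-triangles A --f2--> B2 --g22--> C2 --δ1--> and 0 → C1 --1--> C1 --0-->. -/

import Mathlib

open CategoryTheory CategoryTheory.Limits Opposite ZeroObject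

attribute [local instance] CategoryTheory.Limits.hasBinaryBiproducts_of_finite_biproducts

universe w v u

noncomputable section

/-- An object of a preadditive category with finite biproducts is *indecomposable* if it is
nonzero and admits no nontrivial direct sum decomposition. -/
def Indec {C : Type u} [Category.{v} C] [Preadditive C] [HasFiniteBiproducts C] (X : C) : Prop :=
  ¬ IsZero X ∧ ∀ (Y Z : C), Nonempty (X ≅ Y ⊞ Z) → IsZero Y ∨ IsZero Z

/-- A preadditive category is *Krull-Schmidt* if every object is (isomorphic to) a finite
biproduct of objects having local endomorphism rings. -/
def IsKrullSchmidt (C : Type u) [Category.{v} C] [Preadditive C] [HasFiniteBiproducts C] : Prop :=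
  ∀ X : C, ∃ (n : ℕ) (f : Fin n → C),
    (∀ i, IsLocalRing (CategoryTheory.End (f i))) ∧ Nonempty (X ≅ ⨁ f)

/-- `C` is *locally finite*: for every indecomposable `A` there are, up to isomorphism, only
finitely many indecomposables `B` with `Hom(A, B) ≠ 0`, and only finitely many indecomposables
`B` with `Hom(B, A) ≠ 0`. -/
def LocFinite (C : Type u) [Category.{v} C] [Preadditive C] [HasFiniteBiproducts C] : Prop :=
  ∀ A : C, Indec A →
    (∃ (n : ℕ) (ind : Fin n → C), ∀ B : C, Indec B → (∃ φ : A ⟶ B, φ ≠ 0) →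
        ∃ i, Nonempty (B ≅ ind i)) ∧
    (∃ (n : ℕ) (ind : Fin n → C), ∀ B : C, Indec B → (∃ φ : B ⟶ A, φ ≠ 0) →
        ∃ i, Nonempty (B ≅ ind i))

section ExtCatDef

variable (K : Type w) [Field K]
variable (C : Type u) [Category.{v} C] [Preadditive C] [Linear K C] [HasFiniteBiproducts C]

/-- An extriangulated structure (in the sense of Nakaoka–Palu) on the `K`-linear category `C`,
with `K`-linear extension groups: a biadditive functor `E : Cᵒᵖ × C → Ab` (here landing in
`K`-modules, recording the `K`-linear structure on the extension groups) together with an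
additive realization `real` of extensions by conflations, satisfying (ET1)–(ET4) and their
duals. -/
structure ExtCat where
  /-- the biadditive functor `E : Cᵒᵖ × C → Ab`. -/
  E : Cᵒᵖ ⥤ C ⥤ ModuleCat.{v} K
  additive₁ : E.Additive
  additive₂ : ∀ c : Cᵒᵖ, (E.obj c).Additive
  /-- `real x y δ` says that the sequence `x, y` realizes the extension `δ`, i.e.
  `(x, y, δ)` is an `E`-triangle. -/
  real : ∀ {a b c : C}, (a ⟶ b) → (b ⟶ c) → ((E.obj (op c)).obj a) → Prop
  /-- every extension is realized by some conflation. -/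
  real_exists : ∀ {a c : C} (δ : (E.obj (op c)).obj a),
    ∃ (b : C) (x : a ⟶ b) (y : b ⟶ c), real x y δ
  /-- the realization is well defined on equivalence classes of sequences. -/
  real_congr : ∀ {a b b' c : C} {x : a ⟶ b} {y : b ⟶ c} {x' : a ⟶ b'} {y' : b' ⟶ c}
    {δ : (E.obj (op c)).obj a} (e : b ≅ b'),
      x ≫ e.hom = x' → e.hom ≫ y' = y → real x y δ → real x' y' δ
  /-- any two realizations of the same extension are equivalent sequences. -/
  real_unique : ∀ {a b b' c : C} {x : a ⟶ b} {y : b ⟶ c} {x' : a ⟶ b'} {y' : b' ⟶ c}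
    {δ : (E.obj (op c)).obj a}, real x y δ → real x' y' δ →
      ∃ e : b ≅ b', x ≫ e.hom = x' ∧ e.hom ≫ y' = y
  /-- (ET2) realization of morphisms of extensions: if `f_* δ = g^* δ'` then `(f, g)` extends to
  a morphism of the realizing `E`-triangles. -/
  real_lift : ∀ {a b c a' b' c' : C} {x : a ⟶ b} {y : b ⟶ c} {x' : a' ⟶ b'} {y' : b' ⟶ c'}
    {δ : (E.obj (op c)).obj a} {δ' : (E.obj (op c')).obj a'} (f : a ⟶ a') (g : c ⟶ c'),
      real x y δ → real x' y' δ' →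
      ((E.obj (op c)).map f) δ = ((E.map g.op).app a') δ' →
      ∃ m : b ⟶ b', x ≫ m = f ≫ x' ∧ m ≫ y' = y ≫ g
  /-- the realization is additive, part (i): split extensions are realized by split sequences. -/
  real_zero : ∀ a c : C,
    real (biprod.inl : a ⟶ a ⊞ c) (biprod.snd : a ⊞ c ⟶ c) (0 : (E.obj (op c)).obj a)
  /-- the realization is additive, part (ii): it commutes with direct sums. -/
  real_sum : ∀ {a b c a' b' c' : C} {x : a ⟶ b} {y : b ⟶ c} {x' : a' ⟶ b'} {y' : b' ⟶ c'}
    {δ : (E.obj (op c)).obj a} {δ' : (E.obj (op c')).obj a'},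
      real x y δ → real x' y' δ' →
      real (biprod.map x x') (biprod.map y y')
        (((E.map (biprod.fst : c ⊞ c' ⟶ c).op).app (a ⊞ a'))
            (((E.obj (op c)).map (biprod.inl : a ⟶ a ⊞ a')) δ) +
         ((E.map (biprod.snd : c ⊞ c' ⟶ c').op).app (a ⊞ a'))
            (((E.obj (op c')).map (biprod.inr : a' ⟶ a ⊞ a')) δ'))
  /-- (ET3). -/
  et3 : ∀ {a b c a' b' c' : C} {x : a ⟶ b} {y : b ⟶ c} {x' : a' ⟶ b'} {y' : b' ⟶ c'}
    {δ : (E.obj (op c)).obj a} {δ' : (E.obj (op c')).obj a'} (f : a ⟶ a') (m : b ⟶ b'),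
      real x y δ → real x' y' δ' → x ≫ m = f ≫ x' →
      ∃ g : c ⟶ c', y ≫ g = m ≫ y' ∧ ((E.obj (op c)).map f) δ = ((E.map g.op).app a') δ'
  /-- (ET3)ᵒᵖ. -/
  et3op : ∀ {a b c a' b' c' : C} {x : a ⟶ b} {y : b ⟶ c} {x' : a' ⟶ b'} {y' : b' ⟶ c'}
    {δ : (E.obj (op c)).obj a} {δ' : (E.obj (op c')).obj a'} (g : c ⟶ c') (m : b ⟶ b'),
      real x y δ → real x' y' δ' → m ≫ y' = y ≫ g →
      ∃ f : a ⟶ a', x ≫ m = f ≫ x' ∧ ((E.obj (op c)).map f) δ = ((E.map g.op).app a') δ'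
  /-- (ET4). -/
  et4 : ∀ {A B D F G : C} {f : A ⟶ B} {f' : B ⟶ D} {g : B ⟶ G} {g' : G ⟶ F}
    {δ : (E.obj (op D)).obj A} {δ' : (E.obj (op F)).obj B},
      real f f' δ → real g g' δ' →
      ∃ (Eo : C) (d : D ⟶ Eo) (e : Eo ⟶ F) (h' : G ⟶ Eo) (δ'' : (E.obj (op Eo)).obj A),
        real (f ≫ g) h' δ'' ∧ f' ≫ d = g ≫ h' ∧ h' ≫ e = g' ∧
        real d e (((E.obj (op F)).map f') δ') ∧
        ((E.map d.op).app A) δ'' = δ ∧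
        ((E.obj (op Eo)).map f) δ'' = ((E.map e.op).app B) δ'
  /-- (ET4)ᵒᵖ. -/
  et4op : ∀ {A B D F Cc : C} {f' : D ⟶ A} {f : A ⟶ B} {g' : F ⟶ B} {g : B ⟶ Cc}
    {δ : (E.obj (op B)).obj D} {δ' : (E.obj (op Cc)).obj F},
      real f' f δ → real g' g δ' →
      ∃ (Eo : C) (d : D ⟶ Eo) (e : Eo ⟶ F) (h' : Eo ⟶ A) (δ'' : (E.obj (op Cc)).obj Eo),
        real h' (f ≫ g) δ'' ∧ d ≫ h' = f' ∧ h' ≫ f = e ≫ g' ∧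
        real d e (((E.map g'.op).app D) δ) ∧
        ((E.obj (op Cc)).map e) δ'' = δ' ∧
        ((E.obj (op B)).map d) δ = ((E.map g.op).app Eo) δ''

end ExtCatDef

namespace ExtCat

variable {K : Type w} [Field K]
variable {C : Type u} [Category.{v} C] [Preadditive C] [Linear K C] [HasFiniteBiproducts C]
variable (ξ : ExtCat K C)

/-- The extension group `E(c, a)`. -/
abbrev Ext (c a : C) : Type v := (ξ.E.obj (op c)).obj a

/-- Pushforward `f_* : E(c, a) → E(c, a')` along `f : a ⟶ a'`. -/
def push (c : C) {a a' : C} (f : a ⟶ a') (δ : ξ.Ext c a) : ξ.Ext c a' :=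
  ((ξ.E.obj (op c)).map f) δ

/-- Pullback `g^* : E(c, a) → E(c', a)` along `g : c' ⟶ c`. -/
def pull (a : C) {c c' : C} (g : c' ⟶ c) (δ : ξ.Ext c a) : ξ.Ext c' a :=
  ((ξ.E.map g.op).app a) δ

/-- An object `P` is projective if `E(P, A) = 0` for all `A`. -/
def ProjObj (P : C) : Prop := ∀ (A : C) (δ : ξ.Ext P A), δ = 0

/-- An object `I` is injective if `E(A, I) = 0` for all `A`. -/
def InjObj (I : C) : Prop := ∀ (A : C) (δ : ξ.Ext A I), δ = 0

end ExtCat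

section TriIsoDefs

variable {K : Type w} [Field K]
variable {C : Type u} [Category.{v} C] [Preadditive C] [HasFiniteBiproducts C]
variable (ξ : ExtCat K C)

/-- The direct sum `δ ⊕ δ'` of two `E`-extensions. -/
def extSum {a a' c c' : C} (δ : ξ.Ext c a) (δ' : ξ.Ext c' a') : ξ.Ext (c ⊞ c') (a ⊞ a') :=
  ξ.pull (a ⊞ a') (biprod.fst : c ⊞ c' ⟶ c) (ξ.push c (biprod.inl : a ⟶ a ⊞ a') δ) +
  ξ.pull (a ⊞ a') (biprod.snd : c ⊞ c' ⟶ c') (ξ.push c' (biprod.inr : a' ⟶ a ⊞ a') δ')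

/-- Two `E`-triangles are isomorphic: there is a morphism of `E`-triangles all of whose
components are isomorphisms. -/
def ExtTriIso {a b c a' b' c' : C} (x : a ⟶ b) (y : b ⟶ c) (δ : ξ.Ext c a)
    (x' : a' ⟶ b') (y' : b' ⟶ c') (δ' : ξ.Ext c' a') : Prop :=
  ∃ (ea : a ≅ a') (eb : b ≅ b') (ec : c ≅ c'),
    x ≫ eb.hom = ea.hom ≫ x' ∧ y ≫ ec.hom = eb.hom ≫ y' ∧
    ξ.push c ea.hom δ = ξ.pull a' ec.hom δ'

end TriIsoDefs

/-!
Twisting the third term by the shear `(1, s ≫ y ≫ snd; 0, 1)` of `C₁ ⊞ C₂`, where `s` is a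
section of `y ≫ fst`, turns `s ≫ y` into the inclusion of `C₁`. Since `y^* δ = 0`, the twisted
extension vanishes on `C₁`, hence is pulled back along the projection from its restriction `δ₁`
to `C₂`. So the direct sum of a realization of `δ₁` with the split triangle `0 → C₁ → C₁`
realizes it as well, and uniqueness of realizations identifies the middle terms.

Realizations are invariant under isomorphisms of `E`-triangles because a morphism of
`E`-triangles with invertible ends is invertible; for an endomorphism `u` fixing both ends this
holds since `u - 1` factors through the inflation and is killed by it, so `(u - 1)² = 0`.
-/

lemma Biprod.inl_unipotentUpper_hom_eq {C : Type u} [Category.{v} C] [Preadditive C]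
    [HasBinaryBiproducts C] {X₁ X₂ : C} (φ : X₁ ⟶ X₁ ⊞ X₂) (hφ : φ ≫ biprod.fst = 𝟙 X₁) :
    biprod.inl ≫ (Biprod.unipotentUpper (φ ≫ biprod.snd)).hom = φ := by
  ext <;> simp [Biprod.ofComponents, hφ]

namespace ExtCat

variable {K : Type w} [Field K] {C : Type u} [Category.{v} C] [Preadditive C]
  [HasFiniteBiproducts C] (ξ : ExtCat K C)

instance : ξ.E.Additive := ξ.additive₁

instance (c : Cᵒᵖ) : (ξ.E.obj c).Additive := ξ.additive₂ c

@[simp]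
lemma push_id {a c : C} (δ : ξ.Ext c a) : ξ.push c (𝟙 a) δ = δ := by
  simp [push]

@[simp]
lemma pull_id {a c : C} (δ : ξ.Ext c a) : ξ.pull a (𝟙 c) δ = δ := by
  simp [pull]

@[simp]
lemma push_push {a a' a'' c : C} (f₁ : a ⟶ a') (f₂ : a' ⟶ a'') (δ : ξ.Ext c a) :
    ξ.push c f₂ (ξ.push c f₁ δ) = ξ.push c (f₁ ≫ f₂) δ := by
  simp [push]

@[simp]
lemma pull_pull {a c c' c'' : C} (g₁ : c'' ⟶ c') (g₂ : c' ⟶ c) (δ : ξ.Ext c a) :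
    ξ.pull a g₁ (ξ.pull a g₂ δ) = ξ.pull a (g₁ ≫ g₂) δ := by
  simp [pull]

@[simp]
lemma push_zero {a a' c : C} (f : a ⟶ a') : ξ.push c f (0 : ξ.Ext c a) = 0 :=
  map_zero _

@[simp]
lemma pull_zero {a c c' : C} (g : c' ⟶ c) : ξ.pull a g (0 : ξ.Ext c a) = 0 :=
  map_zero _

lemma pull_push {a a' c c' : C} (f : a ⟶ a') (g : c' ⟶ c) (δ : ξ.Ext c a) :
    ξ.pull a' g (ξ.push c f δ) = ξ.push c' f (ξ.pull a g δ) := by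
  simp [pull, push]

lemma pull_add {a c c' : C} (g g' : c' ⟶ c) (δ : ξ.Ext c a) :
    ξ.pull a (g + g') δ = ξ.pull a g δ + ξ.pull a g' δ := by
  simp [pull, op_add]

lemma eq_pull_fst_add_pull_snd {a P Q : C} (ε : ξ.Ext (P ⊞ Q) a) :
    ε = ξ.pull a biprod.fst (ξ.pull a biprod.inl ε) +
      ξ.pull a biprod.snd (ξ.pull a biprod.inr ε) := by
  rw [pull_pull, pull_pull, ← pull_add, biprod.total, pull_id]

lemma push_inv_eq_pull_inv {a a' c c' : C} (ea : a ≅ a') (ec : c ≅ c') {δ : ξ.Ext c a}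
    {δ' : ξ.Ext c' a'} (h : ξ.push c ea.hom δ = ξ.pull a' ec.hom δ') :
    ξ.push c' ea.inv δ' = ξ.pull a ec.inv δ := by
  calc ξ.push c' ea.inv δ' = ξ.push c' ea.inv (ξ.pull a' (ec.inv ≫ ec.hom) δ') := by simp
    _ = ξ.push c' ea.inv (ξ.pull a' ec.inv (ξ.push c ea.hom δ)) := by rw [h, pull_pull]
    _ = ξ.pull a ec.inv δ := by simp [pull_push]

variable {ξ}

lemma real_id_zero (T : C) : ξ.real (𝟙 T) (0 : T ⟶ 0) 0 :=
  ξ.real_congr (isoBiprodZero (isZero_zero C)).symm (by simp) ((isZero_zero C).eq_of_tgt _ _)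
    (ξ.real_zero T 0)

lemma real_zero_id (T : C) : ξ.real (0 : 0 ⟶ T) (𝟙 T) 0 :=
  ξ.real_congr (isoZeroBiprod (isZero_zero C)).symm (by simp) (by simp) (ξ.real_zero 0 T)

section Triangle

variable {a b c : C} {x : a ⟶ b} {y : b ⟶ c} {δ : ξ.Ext c a}

lemma exists_comp_eq_of_comp_eq_zero (h : ξ.real x y δ) {T : C} (t : T ⟶ b) (ht : t ≫ y = 0) :
    ∃ u : T ⟶ a, u ≫ x = t := by
  obtain ⟨u, hu, -⟩ := ξ.et3op (0 : 0 ⟶ c) t (real_id_zero T) h (by simp [ht])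
  exact ⟨u, by simpa using hu.symm⟩

lemma pull_self_eq_zero (h : ξ.real x y δ) : ξ.pull a y δ = 0 := by
  obtain ⟨g, hg, hδ⟩ := ξ.et3 (0 : 0 ⟶ a) (𝟙 b) (real_zero_id b) h (by simp)
  rw [Category.id_comp, Category.id_comp] at hg
  subst hg
  exact hδ.symm.trans (ξ.push_zero _)

lemma isIso_of_endo_fixing_ends (h : ξ.real x y δ) (u : b ⟶ b) (hx : x ≫ u = x)
    (hy : u ≫ y = y) : IsIso u := by
  set n := u - 𝟙 b
  obtain ⟨w, hw⟩ := exists_comp_eq_of_comp_eq_zero h n (by simp [n, hy])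
  have hn : n ≫ n = 0 := by
    calc n ≫ n = w ≫ x ≫ n := by rw [← Category.assoc, hw]
      _ = 0 := by simp [n, hx]
  have hu : u = 𝟙 b + n := by simp [n]
  refine ⟨𝟙 b - n, ?_, ?_⟩ <;> simp [hu, Preadditive.comp_sub, Preadditive.sub_comp, hn]

lemma isIso₂_of_isIso₁₃ {a' b' c' : C} {x' : a' ⟶ b'} {y' : b' ⟶ c'} {δ' : ξ.Ext c' a'}
    (h : ξ.real x y δ) (h' : ξ.real x' y' δ') (ea : a ≅ a') (m : b ⟶ b') (ec : c ≅ c')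
    (hx : x ≫ m = ea.hom ≫ x') (hy : m ≫ y' = y ≫ ec.hom)
    (hδ : ξ.push c ea.hom δ = ξ.pull a' ec.hom δ') : IsIso m := by
  obtain ⟨m', hx', hy'⟩ := ξ.real_lift ea.inv ec.inv h' h (ξ.push_inv_eq_pull_inv ea ec hδ)
  have hmm' : IsIso (m ≫ m') := isIso_of_endo_fixing_ends h _
    (by simp [reassoc_of% hx, hx']) (by simp [hy', reassoc_of% hy])
  have hm'm : IsIso (m' ≫ m) := isIso_of_endo_fixing_ends h' _
    (by simp [reassoc_of% hx', hx]) (by simp [hy, reassoc_of% hy'])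
  have : IsSplitEpi m :=
    IsSplitEpi.mk' ⟨inv (m' ≫ m) ≫ m', by rw [Category.assoc, IsIso.inv_hom_id]⟩
  have : IsSplitMono m :=
    IsSplitMono.mk' ⟨m' ≫ inv (m ≫ m'), by rw [← Category.assoc, IsIso.hom_inv_id]⟩
  exact isIso_of_mono_of_isSplitEpi m

end Triangle

lemma extTriIso_extSum_zero_of_pull_inl_eq_zero {a b c : C} (f : a ⟶ b) (g : b ⟶ c) (P : C)
    (ε : ξ.Ext (P ⊞ c) a) (hε : ξ.pull a biprod.inl ε = 0) :
    ExtTriIso ξ (biprod.map f (0 : 0 ⟶ P)) (biprod.map g (𝟙 P))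
      (extSum ξ (ξ.pull a biprod.inr ε) 0) (biprod.lift 0 f) (biprod.map (𝟙 P) g) ε := by
  refine ⟨(isoBiprodZero (isZero_zero C)).symm, biprod.braiding b P, biprod.braiding c P,
    by ext <;> simp, biprod.braid_natural _ _, ?_⟩
  conv_rhs => rw [ξ.eq_pull_fst_add_pull_snd ε, hε]
  simp [extSum, pull_push]

end ExtCat

namespace ExtTriIso

variable {K : Type w} [Field K] {C : Type u} [Category.{v} C] [Preadditive C]
  [HasFiniteBiproducts C] {ξ : ExtCat K C}
variable {a b c a' b' c' : C} {x : a ⟶ b} {y : b ⟶ c} {δ : ξ.Ext c a}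
  {x' : a' ⟶ b'} {y' : b' ⟶ c'} {δ' : ξ.Ext c' a'}

lemma symm (hiso : ExtTriIso ξ x y δ x' y' δ') : ExtTriIso ξ x' y' δ' x y δ := by
  obtain ⟨ea, eb, ec, hx, hy, hδ⟩ := hiso
  refine ⟨ea.symm, eb.symm, ec.symm, ?_, ?_, ξ.push_inv_eq_pull_inv ea ec hδ⟩
  · simp [← cancel_epi ea.hom, ← reassoc_of% hx]
  · simp [← cancel_epi eb.hom, ← reassoc_of% hy]

lemma trans {a'' b'' c'' : C} {x'' : a'' ⟶ b''} {y'' : b'' ⟶ c''} {δ'' : ξ.Ext c'' a''}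
    (h₁ : ExtTriIso ξ x y δ x' y' δ') (h₂ : ExtTriIso ξ x' y' δ' x'' y'' δ'') :
    ExtTriIso ξ x y δ x'' y'' δ'' := by
  obtain ⟨ea, eb, ec, hx, hy, hδ⟩ := h₁
  obtain ⟨ea', eb', ec', hx', hy', hδ'⟩ := h₂
  refine ⟨ea ≪≫ ea', eb ≪≫ eb', ec ≪≫ ec', ?_, ?_, ?_⟩
  · simp [reassoc_of% hx, hx']
  · simp [reassoc_of% hy, hy']
  · rw [Iso.trans_hom, Iso.trans_hom, ← ξ.push_push, hδ, ← ξ.pull_push, hδ', ξ.pull_pull]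

lemma real (hiso : ExtTriIso ξ x y δ x' y' δ') (h : ξ.real x y δ) : ξ.real x' y' δ' := by
  obtain ⟨ea, eb, ec, hx, hy, hδ⟩ := hiso
  obtain ⟨b₀, x₀, y₀, h₀⟩ := ξ.real_exists δ'
  obtain ⟨m, hxm, hym⟩ := ξ.real_lift ea.hom ec.hom h h₀ hδ
  have := ExtCat.isIso₂_of_isIso₁₃ h h₀ ea m ec hxm hym hδ
  have hx₀ : x₀ = ea.inv ≫ x ≫ m := by simp [hxm]
  have hy₀ : y₀ = inv m ≫ y ≫ ec.hom := by simp [← hym]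
  exact ξ.real_congr ((asIso m).symm ≪≫ eb) (by simp [hx₀, hx]) (by simp [hy₀, hy]) h₀

end ExtTriIso

theorem stmt5_general (K : Type w) [Field K] (C : Type u) [Category.{v} C] [Preadditive C]
    [HasFiniteBiproducts C] (ξ : ExtCat K C)
    (A B C₁ C₂ : C) (x : A ⟶ B) (y : B ⟶ C₁ ⊞ C₂) (δ : ξ.Ext (C₁ ⊞ C₂) A)
    (hreal : ξ.real x y δ)
    (hretr : ∃ s : C₁ ⟶ B, s ≫ y ≫ biprod.fst = 𝟙 C₁) :
    ∃ (B₂ : C) (f₂ : A ⟶ B₂) (g₂₂ : B₂ ⟶ C₂) (δ₁ : ξ.Ext C₂ A) (δ' : ξ.Ext (C₁ ⊞ C₂) A),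
      ξ.real f₂ g₂₂ δ₁ ∧
      ξ.real (0 : (0 : C) ⟶ C₁) (𝟙 C₁) (0 : ξ.Ext C₁ (0 : C)) ∧
      ξ.real (biprod.lift (0 : A ⟶ C₁) f₂) (biprod.map (𝟙 C₁) g₂₂) δ' ∧
      ExtTriIso ξ x y δ (biprod.lift (0 : A ⟶ C₁) f₂) (biprod.map (𝟙 C₁) g₂₂) δ' ∧
      ExtTriIso ξ x y δ (biprod.map f₂ (0 : (0 : C) ⟶ C₁)) (biprod.map g₂₂ (𝟙 C₁))
        (extSum ξ δ₁ (0 : ξ.Ext C₁ (0 : C))) := by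
  obtain ⟨s, hs⟩ := hretr
  set U := Biprod.unipotentUpper ((s ≫ y) ≫ biprod.snd)
  have hU : biprod.inl ≫ U.hom = s ≫ y :=
    Biprod.inl_unipotentUpper_hom_eq _ (by rw [Category.assoc, hs])
  set δU := ξ.pull A U.hom δ
  have hUδ : ExtTriIso ξ x y δ x (y ≫ U.inv) δU :=
    ⟨Iso.refl A, Iso.refl B, U.symm, by simp, by simp, by simp [δU]⟩
  have hinl : ξ.pull A biprod.inl δU = 0 := by
    rw [ξ.pull_pull, hU, ← ξ.pull_pull, ExtCat.pull_self_eq_zero hreal, ξ.pull_zero]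
  obtain ⟨B₂, f₂, g₂₂, h₁⟩ := ξ.real_exists (ξ.pull A biprod.inr δU)
  have hsplit := ExtCat.extTriIso_extSum_zero_of_pull_inl_eq_zero f₂ g₂₂ C₁ δU hinl
  have hsplitReal := hsplit.real (ξ.real_sum h₁ (ExtCat.real_zero_id C₁))
  obtain ⟨e, hxe, hye⟩ := ξ.real_unique (hUδ.real hreal) hsplitReal
  have hiso : ExtTriIso ξ x y δ (biprod.lift 0 f₂) (biprod.map (𝟙 C₁) g₂₂) δU :=
    hUδ.trans ⟨Iso.refl A, e, Iso.refl _, by simp [hxe], by simp [hye], by simp⟩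
  exact ⟨B₂, f₂, g₂₂, _, δU, h₁, ExtCat.real_zero_id C₁, hsplitReal, hiso,
    hiso.trans hsplit.symm⟩

theorem stmt5 (K : Type w) [Field K] (C : Type u) [Category.{v} C] [Preadditive C]
    [Linear K C] [HasFiniteBiproducts C] (hKS : IsKrullSchmidt C) (ξ : ExtCat K C)
    (homFin : ∀ X Y : C, FiniteDimensional K (X ⟶ Y))
    (extFin : ∀ X Y : C, FiniteDimensional K (ξ.Ext X Y))
    (A B C₁ C₂ : C) (x : A ⟶ B) (y : B ⟶ C₁ ⊞ C₂) (δ : ξ.Ext (C₁ ⊞ C₂) A)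
    (hreal : ξ.real x y δ)
    (hretr : ∃ s : C₁ ⟶ B, s ≫ y ≫ biprod.fst = 𝟙 C₁) :
    ∃ (B₂ : C) (f₂ : A ⟶ B₂) (g₂₂ : B₂ ⟶ C₂) (δ₁ : ξ.Ext C₂ A) (δ' : ξ.Ext (C₁ ⊞ C₂) A),
      ξ.real f₂ g₂₂ δ₁ ∧
      ξ.real (0 : (0 : C) ⟶ C₁) (𝟙 C₁) (0 : ξ.Ext C₁ (0 : C)) ∧
      ξ.real (biprod.lift (0 : A ⟶ C₁) f₂) (biprod.map (𝟙 C₁) g₂₂) δ' ∧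
      ExtTriIso ξ x y δ (biprod.lift (0 : A ⟶ C₁) f₂) (biprod.map (𝟙 C₁) g₂₂) δ' ∧
      ExtTriIso ξ x y δ (biprod.map f₂ (0 : (0 : C) ⟶ C₁)) (biprod.map g₂₂ (𝟙 C₁))
        (extSum ξ δ₁ (0 : ξ.Ext C₁ (0 : C))) :=
  stmt5_general K C ξ A B C₁ C₂ x y δ hreal hretr
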